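/- arXiv:2412.01297 — 3 statements merged into one kernel-verified Lean document; each statement's English description precedes it below -/
import Mathlib

section
/- Let R be a commutative ring, n a finite type, A : Matrix n n R, and σ a permutation of n with permutation matrix P = σ.permMatrix R such that P * A = A * P. Let L₁, …, L_k be graph layers with L_i(X) = (A * X * W_i).map f_i, where each W_i is a weight matrix between appropriate finite feature dimensions and each f_i : R → R is an activation function. Then the composed network z = L_k ∘ ⋯ ∘ L₁ satisfies z(P * X) = P * z(X) for every input feature matrix X. -/
/-- A GNN built on adjacency matrix `A` is a composition of one or more
message-passing layers `X ↦ (A * X * W).map f`, with possibly different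
feature dimensions and activations in each layer. -/
inductive IsGNN {R : Type*} [CommRing R] {n : Type*} [Fintype n] [DecidableEq n]
    (A : Matrix n n R) : {a b : ℕ} → (Matrix n (Fin a) R → Matrix n (Fin b) R) → Prop
  | single {a b : ℕ} (W : Matrix (Fin a) (Fin b) R) (f : R → R) :
      IsGNN A (fun X => (A * X * W).map f)
  | comp {a b c : ℕ} (W : Matrix (Fin a) (Fin b) R) (f : R → R)
      {z : Matrix n (Fin b) R → Matrix n (Fin c) R} (hz : IsGNN A z) :
      IsGNN A (fun X => z ((A * X * W).map f))

/-- **Permutation equivariance of a composed GNN.**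
If the permutation matrix `P = σ.permMatrix R` commutes with the adjacency
matrix `A`, then any composition `z = L_k ∘ ⋯ ∘ L₁` of graph layers
`L_i X = (A * X * W_i).map f_i` satisfies `z (P * X) = P * z X`. -/
theorem gnn_permutation_equivariant
    {R : Type*} [CommRing R] {n : Type*} [Fintype n] [DecidableEq n]
    (A : Matrix n n R) (σ : Equiv.Perm n)
    (hA : (σ.permMatrix R) * A = A * (σ.permMatrix R))
    {a b : ℕ} {z : Matrix n (Fin a) R → Matrix n (Fin b) R}
    (hz : IsGNN A z) :
    ∀ X : Matrix n (Fin a) R,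
      z ((σ.permMatrix R) * X) = (σ.permMatrix R) * z X := by
  have key : ∀ {c d : ℕ} (M : Matrix n (Fin c) R) (W : Matrix (Fin c) (Fin d) R) (f : R → R),
      (A * ((σ.permMatrix R) * M) * W).map f = (σ.permMatrix R) * (A * M * W).map f := by
    intro c d M W f
    have h1 : A * ((σ.permMatrix R) * M) * W = (σ.permMatrix R) * (A * M * W) := by
      rw [← Matrix.mul_assoc, ← hA]
      simp [Matrix.mul_assoc]
    rw [h1, PEquiv.toMatrix_toPEquiv_mul, PEquiv.toMatrix_toPEquiv_mul, Matrix.submatrix_map]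
  induction hz with
  | single W f => intro X; exact key X W f
  | comp W f hz ih => intro X; simp only []; have := ih ((A * X * W).map f); rw [← key X W f] at this; exact this
end

section
/- Let G be a commutative group, R a commutative ring, and ρ : G →* GL(n, R) a representation of G by invertible n × n matrices. For families X : G → Matrix n d R, define the Euclidean action (g ⊲ X) p = X (p * g), the morphological action (g ⊳ X) p = ρ(g) * X (p * g), and the decoder l(X) p = (ρ p)⁻¹ * X p. Then for all g ∈ G and all X, l(g ⊲ X) = g ⊳ l(X). -/
/-- The Euclidean action on families of node-feature matrices indexed by group
elements: `(g ⊲ X) p = X (p * g)`. -/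
def eucAct {G : Type*} [CommGroup G] {R n d : Type*}
    (g : G) (X : G → Matrix n d R) : G → Matrix n d R :=
  fun p => X (p * g)

/-- The morphological action: `(g ⊳ X) p = ρ g * X (p * g)`. -/
def morphAct {G : Type*} [CommGroup G] {R : Type*} [CommRing R]
    {n d : Type*} [Fintype n] [DecidableEq n]
    (ρ : G →* Matrix.GeneralLinearGroup n R) (g : G) (X : G → Matrix n d R) :
    G → Matrix n d R :=
  fun p => (ρ g : Matrix n n R) * X (p * g)

/-- The output decoder: `l(X) p = (ρ p)⁻¹ * X p`. -/
def decoder {G : Type*} [CommGroup G] {R : Type*} [CommRing R]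
    {n d : Type*} [Fintype n] [DecidableEq n]
    (ρ : G →* Matrix.GeneralLinearGroup n R) (X : G → Matrix n d R) :
    G → Matrix n d R :=
  fun p => (((ρ p)⁻¹ : Matrix.GeneralLinearGroup n R) : Matrix n n R) * X p

theorem MonoidHom.mul_inv_map_mul {G H : Type*} [Group G] [Group H] (f : G →* H) (p g : G) :
    f g * (f (p * g))⁻¹ = (f p)⁻¹ := by
  rw [map_mul, mul_inv_rev, mul_inv_cancel_left]

/-- **Decoder intertwining (paper's Theorem 2, decoder step).**
For a commutative group `G`, the decoder turns the Euclidean action into the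
morphological action: `l (g ⊲ X) = g ⊳ l X`. -/
theorem decoder_intertwines
    {G : Type*} [CommGroup G] {R : Type*} [CommRing R]
    {n d : Type*} [Fintype n] [DecidableEq n]
    (ρ : G →* Matrix.GeneralLinearGroup n R) (g : G) (X : G → Matrix n d R) :
    decoder ρ (eucAct g X) = morphAct ρ g (decoder ρ X) := by
  funext p
  simp only [decoder, eucAct, morphAct]
  rw [← Matrix.mul_assoc, ← Units.val_mul, ρ.mul_inv_map_mul]
end

section
/- Let G be a commutative group, R a commutative ring, and ρ : G →* GL(n, R) a representation of G by invertible n × n matrices. On families X : G → Matrix n d R, define the Euclidean action (g ⊲ X) p = X (p * g) and the morphological action (g ⊳ X) p = ρ(g) * X (p * g); define the encoder h(X) p = ρ(p) * X p and the decoder l(X) p = (ρ p)⁻¹ * X p. Suppose z is a map on such families that is Euclidean-equivariant: z(g ⊲ X) = g ⊲ z(X) for all g, X. Then the network f = l ∘ z ∘ h is morphologically equivariant: f(g ⊳ X) = g ⊳ f(X) for all g ∈ G and all X. -/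
/-- The input encoder: `h(X) p = ρ p * X p`. -/
def encoder {G : Type*} [CommGroup G] {R : Type*} [CommRing R]
    {n d : Type*} [Fintype n] [DecidableEq n]
    (ρ : G →* Matrix.GeneralLinearGroup n R) (X : G → Matrix n d R) :
    G → Matrix n d R :=
  fun p => (ρ p : Matrix n n R) * X p

section Intertwining

variable {G : Type*} [CommGroup G] {R : Type*} [CommRing R] {n d : Type*} [Fintype n]
  [DecidableEq n] (ρ : G →* Matrix.GeneralLinearGroup n R)

theorem encoder_morphAct (g : G) (X : G → Matrix n d R) :
    encoder ρ (morphAct ρ g X) = eucAct g (encoder ρ X) := by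
  funext p
  simp only [encoder, morphAct, eucAct, ← Matrix.mul_assoc, ← Matrix.GeneralLinearGroup.coe_mul,
    ← map_mul]

theorem decoder_eucAct (g : G) (Y : G → Matrix n d R) :
    decoder ρ (eucAct g Y) = morphAct ρ g (decoder ρ Y) := by
  funext p
  have hinv : ρ g * (ρ (p * g))⁻¹ = (ρ p)⁻¹ := by
    rw [← map_inv, ← map_mul, ← map_inv, mul_inv_rev, mul_inv_cancel_left]
  simp only [decoder, morphAct, eucAct, ← Matrix.mul_assoc, ← Matrix.GeneralLinearGroup.coe_mul,
    hinv]

end Intertwining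

/-- **Morphological-Symmetry-Equivariant network (paper's Theorem 2, concrete form).**
If `z` is Euclidean-equivariant, then `f = l ∘ z ∘ h` (decoder ∘ GNN ∘ encoder)
is morphologically equivariant: `f (g ⊳ X) = g ⊳ f X`. -/
theorem ms_hgnn_morphologically_equivariant
    {G : Type*} [CommGroup G] {R : Type*} [CommRing R]
    {n d : Type*} [Fintype n] [DecidableEq n]
    (ρ : G →* Matrix.GeneralLinearGroup n R)
    (z : (G → Matrix n d R) → (G → Matrix n d R))
    (hz : ∀ (g : G) (X : G → Matrix n d R), z (eucAct g X) = eucAct g (z X)) :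
    ∀ (g : G) (X : G → Matrix n d R),
      (decoder ρ ∘ z ∘ encoder ρ) (morphAct ρ g X)
        = morphAct ρ g ((decoder ρ ∘ z ∘ encoder ρ) X) := by
  intro g X
  simp only [Function.comp_apply, encoder_morphAct, hz, decoder_eucAct]
end
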